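/- arXiv:1405.0120 — 2 statements merged into one kernel-verified Lean document; each statement's English description precedes it below -/
import Mathlib

section
/- Let n ≥ 3 be an integer and h(λ,ρ,r) = (λ² − (ρ−r)²)^{(n−3)/2} ((ρ+r)² − λ²)^{(n−3)/2}. For |ρ−r| ≤ λ ≤ ρ+r, ρ ≥ 0, r ≥ 0, one has h(λ,ρ,r) ≤ 2^{n−3} ρ^{n−3} r^{(n−3)/2} λ^{(n−3)/2}. -/
open Real

theorem kernel_bound_mixed (n : ℕ) (hn : 3 ≤ n) (lam ρ r : ℝ)
    (hρ : 0 ≤ ρ) (hr : 0 ≤ r) (h1 : |ρ - r| ≤ lam) (h2 : lam ≤ ρ + r) :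
    (lam ^ 2 - (ρ - r) ^ 2) ^ (((n : ℝ) - 3) / 2) *
      ((ρ + r) ^ 2 - lam ^ 2) ^ (((n : ℝ) - 3) / 2)
      ≤ (2 : ℝ) ^ ((n : ℝ) - 3) * ρ ^ ((n : ℝ) - 3) *
        r ^ (((n : ℝ) - 3) / 2) * lam ^ (((n : ℝ) - 3) / 2) := by
  set α : ℝ := ((n : ℝ) - 3) / 2 with hα
  have hn3 : (0 : ℝ) ≤ (n : ℝ) - 3 := by
    have : (3 : ℝ) ≤ (n : ℝ) := by exact_mod_cast hn
    linarith
  have hαpos : 0 ≤ α := by positivity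
  have hlam : 0 ≤ lam := le_trans (abs_nonneg _) h1
  have habs : (ρ - r) ^ 2 ≤ lam ^ 2 := by
    have := sq_abs (ρ - r)
    nlinarith [abs_nonneg (ρ - r)]
  have hA : 0 ≤ lam ^ 2 - (ρ - r) ^ 2 := by linarith
  have hB : 0 ≤ (ρ + r) ^ 2 - lam ^ 2 := by nlinarith
  -- ρ ≥ |λ - r|
  have hρ1 : lam - r ≤ ρ := by linarith
  have hρ2 : r - lam ≤ ρ := by
    have := neg_abs_le (ρ - r)
    linarith
  have hρsq : (lam - r) ^ 2 ≤ ρ ^ 2 := by nlinarith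
  have key : (lam ^ 2 - (ρ - r) ^ 2) * ((ρ + r) ^ 2 - lam ^ 2)
      ≤ 4 * ρ ^ 2 * (r * lam) := by
    have e : (lam ^ 2 - (ρ - r) ^ 2) * ((ρ + r) ^ 2 - lam ^ 2)
        = (ρ ^ 2 - (lam - r) ^ 2) * ((lam + r) ^ 2 - ρ ^ 2) := by ring
    have h3 : ρ ≤ lam + r := by
      have := le_abs_self (ρ - r)
      linarith
    have h4 : 0 ≤ (lam + r) ^ 2 - ρ ^ 2 := by nlinarith
    have h5 : (lam + r) ^ 2 - ρ ^ 2 ≤ 4 * (r * lam) := by nlinarith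
    calc (lam ^ 2 - (ρ - r) ^ 2) * ((ρ + r) ^ 2 - lam ^ 2)
        = (ρ ^ 2 - (lam - r) ^ 2) * ((lam + r) ^ 2 - ρ ^ 2) := e
      _ ≤ ρ ^ 2 * (4 * (r * lam)) := by nlinarith
      _ = 4 * ρ ^ 2 * (r * lam) := by ring
  calc (lam ^ 2 - (ρ - r) ^ 2) ^ α * ((ρ + r) ^ 2 - lam ^ 2) ^ α
      = ((lam ^ 2 - (ρ - r) ^ 2) * ((ρ + r) ^ 2 - lam ^ 2)) ^ α := by
        rw [Real.mul_rpow hA hB]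
    _ ≤ (4 * ρ ^ 2 * (r * lam)) ^ α := by
        apply Real.rpow_le_rpow (by positivity) key hαpos
    _ = (2 : ℝ) ^ ((n : ℝ) - 3) * ρ ^ ((n : ℝ) - 3) * r ^ α * lam ^ α := by
        rw [Real.mul_rpow (by positivity) (mul_nonneg hr hlam),
          Real.mul_rpow (by norm_num : (0:ℝ) ≤ 4) (by positivity),
          Real.mul_rpow hr hlam]
        have h2a : (2 : ℝ) * α = (n : ℝ) - 3 := by rw [hα]; ring
        have h4 : (4 : ℝ) ^ α = (2 : ℝ) ^ ((n : ℝ) - 3) := by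
          rw [← h2a, Real.rpow_mul (by norm_num : (0:ℝ) ≤ 2), Real.rpow_two]
          norm_num
        have hρ4 : (ρ ^ 2) ^ α = ρ ^ ((n : ℝ) - 3) := by
          rw [← Real.rpow_natCast ρ 2, ← Real.rpow_mul hρ]
          norm_num [h2a]
        rw [h4, hρ4]; ring
end

section
/- Let n ≥ 3, k > 1, and let f ∈ C₀⁴(ℝⁿ), g ∈ C₀³(ℝⁿ) with supports in {|x| ≤ k}. Then there is a constant C depending only on n and k such that (t + |x| + 2k)^{n−2} |V(x,t)| ≤ C ( Σ_{|β|≤2} ‖∇ₓ^β f‖_{L^∞} + Σ_{|γ|≤1} ‖∇ₓ^γ g‖_{L^∞} ) for all (x,t) ∈ ℝⁿ × [0,∞), where V(x,t) = (1/ωₙ)∫_{|ω|=1}((tω·∇f)/(n−2) + f + tg)(x+tω) dS_ω. -/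
/-!
Since `f` and `g` are supported in the ball of radius `k`, the integrand of `V(x, t)` vanishes
unless `x + tω` lies in that ball, and there it is bounded by `(1 + t)` times the `C¹` norms of
the data. The directions `ω` with `‖x + tω‖ ≤ k` form a cap on the sphere. Thickening it radially
to the shell `t < r < t + k` gives, in polar coordinates, a set of volume at least
`t ^ (n - 1) * k * σ(cap)`, and this set lies in a ball of radius `2k`; hence
`σ(cap) ≲ t ^ (1 - n)`, which beats the weight `(1 + t) (t + ‖x‖ + 2k) ^ (n - 2) ≲ t ^ (n - 1)` when
`t > k`. For `t ≤ k` all quantities are bounded, and for `‖x‖ > t + k` the cap is empty.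
-/

open MeasureTheory Metric

/-- The surface measure of the unit sphere in `ℝⁿ`. -/
noncomputable def sphereMeasure (n : ℕ) :
    Measure (sphere (0 : EuclideanSpace ℝ (Fin n)) 1) :=
  Measure.toSphere (volume : Measure (EuclideanSpace ℝ (Fin n)))

/-- Total mass `ωₙ` of the unit sphere in `ℝⁿ`. -/
noncomputable def sphereArea (n : ℕ) : ℝ := ((sphereMeasure n) Set.univ).toReal

/-- The linear part `V` of the Agemi–Takamura integral equation. -/
noncomputable def linearPart (n : ℕ) (f g : EuclideanSpace ℝ (Fin n) → ℝ)
    (x : EuclideanSpace ℝ (Fin n)) (t : ℝ) : ℝ :=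
  (sphereArea n)⁻¹ *
    ∫ ω : sphere (0 : EuclideanSpace ℝ (Fin n)) 1,
      (t * fderiv ℝ f (x + t • (ω : EuclideanSpace ℝ (Fin n)))
          (ω : EuclideanSpace ℝ (Fin n)) / ((n : ℝ) - 2)
        + f (x + t • (ω : EuclideanSpace ℝ (Fin n)))
        + t * g (x + t • (ω : EuclideanSpace ℝ (Fin n))))
      ∂(sphereMeasure n)

open Set Module

section SphereCap

variable {E : Type*} [NormedAddCommGroup E] [NormedSpace ℝ E]

def sphereCap (x : E) (t k : ℝ) : Set (sphere (0 : E) 1) := {ω | ‖x + t • (ω : E)‖ ≤ k}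

theorem measurableSet_sphereCap [MeasurableSpace E] [BorelSpace E] (x : E) (t k : ℝ) :
    MeasurableSet (sphereCap x t k) :=
  measurableSet_le (by fun_prop) measurable_const

theorem sphereCap_eq_empty {x : E} {t k : ℝ} (ht : 0 ≤ t) (hx : t + k < ‖x‖) :
    sphereCap x t k = ∅ := by
  refine eq_empty_of_forall_notMem fun ω (hω : ‖x + t • (ω : E)‖ ≤ k) => ?_
  have := norm_sub_le (x + t • (ω : E)) (t • (ω : E))
  rw [add_sub_cancel_right, norm_smul, norm_eq_of_mem_sphere ω, Real.norm_of_nonneg ht] at this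
  linarith

end SphereCap

namespace MeasureTheory.Measure

theorem ofReal_pow_mul_le_volumeIoiPow_Ioo (d : ℕ) {t : ℝ} (ht : 0 ≤ t) (k : ℝ) :
    ENNReal.ofReal (t ^ d * k) ≤ volumeIoiPow d (Subtype.val ⁻¹' Ioo t (t + k)) := by
  have hIoo : MeasurableSet (Subtype.val ⁻¹' Ioo t (t + k) : Set (Ioi (0 : ℝ))) :=
    measurable_subtype_coe measurableSet_Ioo
  rw [volumeIoiPow, withDensity_apply _ hIoo, setLIntegral_subtype measurableSet_Ioi _
    (fun r : ℝ => ENNReal.ofReal (r ^ d)), Subtype.image_preimage_coe,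
    inter_eq_right.2 (Ioo_subset_Ioi_self.trans (Ioi_subset_Ioi ht))]
  calc ENNReal.ofReal (t ^ d * k)
      = ∫⁻ _ in Ioo t (t + k), ENNReal.ofReal (t ^ d) := by
        rw [setLIntegral_const, Real.volume_Ioo, add_sub_cancel_left,
          ← ENNReal.ofReal_mul (by positivity)]
    _ ≤ ∫⁻ r in Ioo t (t + k), ENNReal.ofReal (r ^ d) :=
        setLIntegral_mono (by fun_prop) fun r hr =>
          ENNReal.ofReal_le_ofReal (pow_le_pow_left₀ ht hr.1.le d)

variable {E : Type*} [NormedAddCommGroup E] [NormedSpace ℝ E] [FiniteDimensional ℝ E]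
  [MeasurableSpace E] [BorelSpace E] (μ : Measure E) [μ.IsAddHaarMeasure]

theorem toSphere_mul_ofReal_le_of_subset {t k : ℝ} (ht : 0 ≤ t) {A : Set (sphere (0 : E) 1)}
    (hA : MeasurableSet A) {B : Set E}
    (hB : ∀ ω ∈ A, ∀ r ∈ Ioo t (t + k), r • (ω : E) ∈ B) :
    μ.toSphere A * ENNReal.ofReal (t ^ (finrank ℝ E - 1) * k) ≤ μ B := by
  set S : Set (Ioi (0 : ℝ)) := Subtype.val ⁻¹' Ioo t (t + k)
  have hS : MeasurableSet S := measurable_subtype_coe measurableSet_Ioo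
  have hsub : Subtype.val '' (homeomorphUnitSphereProd E ⁻¹' A ×ˢ S) ⊆ B := by
    rintro _ ⟨⟨z, hz⟩, ⟨hzA, hzS⟩, rfl⟩
    have hz0 : ‖z‖ ≠ 0 := norm_ne_zero_iff.2 hz
    simpa [smul_smul, mul_inv_cancel₀ hz0] using hB _ hzA _ hzS
  calc μ.toSphere A * ENNReal.ofReal (t ^ (finrank ℝ E - 1) * k)
      ≤ μ.toSphere A * volumeIoiPow (finrank ℝ E - 1) S := by
        gcongr; exact ofReal_pow_mul_le_volumeIoiPow_Ioo _ ht k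
    _ = μ (Subtype.val '' (homeomorphUnitSphereProd E ⁻¹' A ×ˢ S)) := by
        rw [← prod_prod, ← (μ.measurePreserving_homeomorphUnitSphereProd).measure_preimage
          (hA.prod hS).nullMeasurableSet,
          comap_subtype_coe_apply (measurableSet_singleton (0 : E)).compl]
    _ ≤ μ B := measure_mono hsub

theorem toSphere_sphereCap_mul_le {t : ℝ} (ht : 0 ≤ t) (x : E) (k : ℝ) :
    μ.toSphere (sphereCap x t k) * ENNReal.ofReal (t ^ (finrank ℝ E - 1) * k)
      ≤ μ (closedBall 0 (2 * k)) := by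
  rw [← μ.addHaar_closedBall_center (-x)]
  refine toSphere_mul_ofReal_le_of_subset μ ht (measurableSet_sphereCap x t k)
    fun ω hω r hr => ?_
  have hω1 : ‖(ω : E)‖ = 1 := norm_eq_of_mem_sphere ω
  rw [mem_closedBall, dist_eq_norm, sub_neg_eq_add, add_comm]
  calc ‖x + r • (ω : E)‖ = ‖(x + t • (ω : E)) + (r - t) • (ω : E)‖ := by
        rw [sub_smul]; abel_nf
    _ ≤ k + (r - t) := by
        grw [norm_add_le, norm_smul, hω1, mul_one, Real.norm_of_nonneg (by linarith [hr.1])]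
        exact add_le_add_left hω _
    _ ≤ 2 * k := by linarith [hr.2]

theorem toSphere_real_sphereCap_mul_le {t : ℝ} (ht : 0 ≤ t) (x : E) {k : ℝ} (hk : 0 ≤ k) :
    μ.toSphere.real (sphereCap x t k) * (t ^ (finrank ℝ E - 1) * k)
      ≤ μ.real (closedBall 0 (2 * k)) := by
  have h := ENNReal.toReal_mono measure_closedBall_lt_top.ne (μ.toSphere_sphereCap_mul_le ht x k)
  rwa [ENNReal.toReal_mul, ENNReal.toReal_ofReal (by positivity)] at h

theorem exists_pow_mul_toSphere_real_sphereCap_le (hd : 2 ≤ finrank ℝ E) {k : ℝ} (hk : 0 < k) :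
    ∃ K, ∀ (x : E) (t : ℝ), 0 ≤ t →
      (t + ‖x‖ + 2 * k) ^ (finrank ℝ E - 2) * (μ.toSphere.real (sphereCap x t k) * (1 + t))
        ≤ K := by
  set d := finrank ℝ E
  set σ := μ.toSphere
  have hK₁ : 0 ≤ (5 * k) ^ (d - 2) * (σ.real univ * (1 + k)) := by positivity
  have hK₂ : 0 ≤ 5 ^ (d - 2) * (1 / k + 1) * (μ.real (closedBall 0 (2 * k)) / k) := by positivity
  refine ⟨(5 * k) ^ (d - 2) * (σ.real univ * (1 + k))
    + 5 ^ (d - 2) * (1 / k + 1) * (μ.real (closedBall 0 (2 * k)) / k), fun x t ht => ?_⟩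
  rcases lt_or_ge (t + k) ‖x‖ with hx | hx
  · rw [sphereCap_eq_empty ht hx, measureReal_empty]
    linarith
  rcases le_or_gt t k with htk | htk
  · calc (t + ‖x‖ + 2 * k) ^ (d - 2) * (σ.real (sphereCap x t k) * (1 + t))
        ≤ (5 * k) ^ (d - 2) * (σ.real univ * (1 + k)) := by
          gcongr
          · linarith
          · exact measure_ne_top _ _
          · exact subset_univ _
      _ ≤ _ := le_add_of_nonneg_right hK₂
  · have hpow : t ^ (d - 2) * t = t ^ (d - 1) := by rw [← pow_succ]; congr 1; omega
    have hcap := μ.toSphere_real_sphereCap_mul_le ht x hk.le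
    calc (t + ‖x‖ + 2 * k) ^ (d - 2) * (σ.real (sphereCap x t k) * (1 + t))
        ≤ (5 * t) ^ (d - 2) * (σ.real (sphereCap x t k) * ((1 / k + 1) * t)) := by
          gcongr
          · linarith
          · rw [add_mul, one_div_mul_eq_div, one_mul]
            linarith [(one_le_div hk).2 htk.le]
      _ = 5 ^ (d - 2) * (1 / k + 1) * (σ.real (sphereCap x t k) * (t ^ (d - 1) * k) / k) := by
          rw [← hpow]; field_simp; ring
      _ ≤ 5 ^ (d - 2) * (1 / k + 1) * (μ.real (closedBall 0 (2 * k)) / k) := by gcongr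
      _ ≤ _ := le_add_of_nonneg_left hK₁

end MeasureTheory.Measure

theorem norm_iteratedFDeriv_le_iSup {𝕜 E F : Type*} [NontriviallyNormedField 𝕜]
    [NormedAddCommGroup E] [NormedSpace 𝕜 E] [NormedAddCommGroup F] [NormedSpace 𝕜 F]
    {f : E → F} {m : WithTop ℕ∞} {j : ℕ} (hf : ContDiff 𝕜 m f) (hj : j ≤ m)
    (hs : HasCompactSupport f) (y : E) :
    ‖iteratedFDeriv 𝕜 j f y‖ ≤ ⨆ z, ‖iteratedFDeriv 𝕜 j f z‖ :=
  le_ciSup ((hf.continuous_iteratedFDeriv hj).norm.bddAbove_range_of_hasCompactSupport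
    (hs.iteratedFDeriv j).norm) y

instance (n : ℕ) : IsFiniteMeasure (sphereMeasure n) := by
  unfold sphereMeasure; infer_instance

theorem sphereArea_nonneg (n : ℕ) : 0 ≤ sphereArea n := ENNReal.toReal_nonneg

section LinearPart

variable {n : ℕ} {f g : EuclideanSpace ℝ (Fin n) → ℝ} {x : EuclideanSpace ℝ (Fin n)} {t : ℝ}

noncomputable def linearPartIntegrand (n : ℕ) (f g : EuclideanSpace ℝ (Fin n) → ℝ)
    (x : EuclideanSpace ℝ (Fin n)) (t : ℝ) (ω : EuclideanSpace ℝ (Fin n)) : ℝ :=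
  t * fderiv ℝ f (x + t • ω) ω / ((n : ℝ) - 2) + f (x + t • ω) + t * g (x + t • ω)

theorem linearPart_eq_integral (n : ℕ) (f g : EuclideanSpace ℝ (Fin n) → ℝ)
    (x : EuclideanSpace ℝ (Fin n)) (t : ℝ) :
    linearPart n f g x t = (sphereArea n)⁻¹ *
      ∫ ω : sphere (0 : EuclideanSpace ℝ (Fin n)) 1, linearPartIntegrand n f g x t ω
        ∂(sphereMeasure n) :=
  rfl

theorem linearPartIntegrand_eq_zero {ω : EuclideanSpace ℝ (Fin n)}
    (hf : x + t • ω ∉ tsupport f) (hg : x + t • ω ∉ tsupport g) :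
    linearPartIntegrand n f g x t ω = 0 := by
  simp [linearPartIntegrand, image_eq_zero_of_notMem_tsupport hf,
    image_eq_zero_of_notMem_tsupport hg, fderiv_of_notMem_tsupport ℝ hf]

theorem norm_linearPartIntegrand_le (hn : 3 ≤ n) (ht : 0 ≤ t) {A A' B : ℝ}
    (hf₀ : ∀ y, ‖f y‖ ≤ A) (hf₁ : ∀ y, ‖fderiv ℝ f y‖ ≤ A') (hg₀ : ∀ y, ‖g y‖ ≤ B)
    {ω : EuclideanSpace ℝ (Fin n)} (hω : ‖ω‖ = 1) :
    ‖linearPartIntegrand n f g x t ω‖ ≤ (1 + t) * (A + A' + B) := by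
  set y := x + t • ω
  have hA : 0 ≤ A := (norm_nonneg _).trans (hf₀ 0)
  have hA' : 0 ≤ A' := (norm_nonneg _).trans (hf₁ 0)
  have hB : 0 ≤ B := (norm_nonneg _).trans (hg₀ 0)
  have hn₂ : (1 : ℝ) ≤ (n : ℝ) - 2 := by
    have : (3 : ℝ) ≤ n := by exact_mod_cast hn
    linarith
  have hdf : ‖fderiv ℝ f y ω‖ ≤ A' := by
    simpa [hω] using (fderiv ℝ f y).le_of_opNorm_le (hf₁ y) ω
  have hdiv : ‖t * fderiv ℝ f y ω / ((n : ℝ) - 2)‖ ≤ t * A' := by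
    rw [norm_div, norm_mul, Real.norm_of_nonneg ht,
      Real.norm_of_nonneg (by linarith : (0 : ℝ) ≤ n - 2)]
    exact (div_le_self (by positivity) hn₂).trans (by gcongr)
  calc ‖linearPartIntegrand n f g x t ω‖
      ≤ ‖t * fderiv ℝ f y ω / ((n : ℝ) - 2)‖ + ‖f y‖ + ‖t * g y‖ := norm_add₃_le
    _ ≤ t * A' + A + t * B := by
        rw [norm_mul, Real.norm_of_nonneg ht]
        gcongr
        exacts [hf₀ y, hg₀ y]
    _ ≤ (1 + t) * (A + A' + B) := by nlinarith [mul_nonneg ht hA, mul_nonneg ht hB]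

theorem abs_linearPart_le (hn : 3 ≤ n) {k : ℝ} (hsf : tsupport f ⊆ closedBall 0 k)
    (hsg : tsupport g ⊆ closedBall 0 k) {A A' B : ℝ} (hf₀ : ∀ y, ‖f y‖ ≤ A)
    (hf₁ : ∀ y, ‖fderiv ℝ f y‖ ≤ A') (hg₀ : ∀ y, ‖g y‖ ≤ B) (ht : 0 ≤ t) :
    |linearPart n f g x t| ≤ (sphereArea n)⁻¹ *
      ((1 + t) * (A + A' + B) * (sphereMeasure n).real (sphereCap x t k)) := by
  have hoff : ∀ ω ∉ sphereCap x t k, linearPartIntegrand n f g x t ω = 0 := fun ω hω =>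
    have hy : x + t • (ω : EuclideanSpace ℝ (Fin n)) ∉ closedBall 0 k := by
      simpa [sphereCap, mem_closedBall_zero_iff] using hω
    linearPartIntegrand_eq_zero (fun h => hy (hsf h)) (fun h => hy (hsg h))
  rw [linearPart_eq_integral, abs_mul, abs_inv, abs_of_nonneg (sphereArea_nonneg n),
    ← Real.norm_eq_abs, ← setIntegral_eq_integral_of_forall_compl_eq_zero hoff]
  gcongr
  · exact inv_nonneg.2 (sphereArea_nonneg n)
  · exact norm_setIntegral_le_of_norm_le_const (measure_lt_top _ _) fun ω _ =>
      norm_linearPartIntegrand_le hn ht hf₀ hf₁ hg₀ (norm_eq_of_mem_sphere ω)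

end LinearPart

theorem abs_linearPart_le_sum_iSup {n : ℕ} (hn : 3 ≤ n) {k : ℝ}
    {f g : EuclideanSpace ℝ (Fin n) → ℝ} (hf : ContDiff ℝ 1 f) (hg : Continuous g)
    (hsf : tsupport f ⊆ closedBall 0 k) (hsg : tsupport g ⊆ closedBall 0 k)
    (x : EuclideanSpace ℝ (Fin n)) {t : ℝ} (ht : 0 ≤ t) :
    |linearPart n f g x t| ≤ (sphereArea n)⁻¹ * ((1 + t) *
      ((∑ j ∈ Finset.range 3, ⨆ y, ‖iteratedFDeriv ℝ j f y‖)
        + ∑ j ∈ Finset.range 2, ⨆ y, ‖iteratedFDeriv ℝ j g y‖) *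
      (sphereMeasure n).real (sphereCap x t k)) := by
  have hcf : HasCompactSupport f :=
    (isCompact_closedBall 0 k).of_isClosed_subset (isClosed_tsupport f) hsf
  have hcg : HasCompactSupport g :=
    (isCompact_closedBall 0 k).of_isClosed_subset (isClosed_tsupport g) hsg
  have hf₀ : ∀ y, ‖f y‖ ≤ ⨆ z, ‖f z‖ := by
    simpa only [norm_iteratedFDeriv_zero] using
      norm_iteratedFDeriv_le_iSup (j := 0) hf (by norm_num) hcf
  have hf₁ : ∀ y, ‖fderiv ℝ f y‖ ≤ ⨆ z, ‖fderiv ℝ f z‖ := by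
    simpa only [norm_iteratedFDeriv_one] using norm_iteratedFDeriv_le_iSup (j := 1) hf le_rfl hcf
  have hg₀ : ∀ y, ‖g y‖ ≤ ⨆ z, ‖g z‖ := by
    simpa only [norm_iteratedFDeriv_zero] using
      norm_iteratedFDeriv_le_iSup (j := 0) (contDiff_zero (𝕜 := ℝ).2 hg) le_rfl hcg
  refine (abs_linearPart_le hn hsf hsg hf₀ hf₁ hg₀ ht).trans ?_
  have h2f : 0 ≤ ⨆ y, ‖iteratedFDeriv ℝ 2 f y‖ := Real.iSup_nonneg fun _ => norm_nonneg _
  have h1g : 0 ≤ ⨆ y, ‖iteratedFDeriv ℝ 1 g y‖ := Real.iSup_nonneg fun _ => norm_nonneg _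
  gcongr _ * (_ * ?_ * _)
  · exact inv_nonneg.2 (sphereArea_nonneg n)
  · simp only [Finset.sum_range_succ, Finset.sum_range_zero, zero_add, norm_iteratedFDeriv_zero,
      norm_iteratedFDeriv_one] at h1g ⊢
    linarith

/-- Decay estimate for the linear part `V`. -/
theorem decay_linear_part (n : ℕ) (hn : 3 ≤ n) (k : ℝ) (hk : 1 < k) :
    ∃ C : ℝ, 0 < C ∧
      ∀ (f g : EuclideanSpace ℝ (Fin n) → ℝ),
        ContDiff ℝ 4 f → ContDiff ℝ 3 g →
        tsupport f ⊆ closedBall (0 : EuclideanSpace ℝ (Fin n)) k →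
        tsupport g ⊆ closedBall (0 : EuclideanSpace ℝ (Fin n)) k →
        ∀ (x : EuclideanSpace ℝ (Fin n)) (t : ℝ), 0 ≤ t →
          (t + ‖x‖ + 2 * k) ^ (n - 2) * |linearPart n f g x t|
            ≤ C * ((∑ j ∈ Finset.range 3, ⨆ y, ‖iteratedFDeriv ℝ j f y‖)
                + ∑ j ∈ Finset.range 2, ⨆ y, ‖iteratedFDeriv ℝ j g y‖) := by
  obtain ⟨K, hK⟩ :=
    (volume : Measure (EuclideanSpace ℝ (Fin n))).exists_pow_mul_toSphere_real_sphereCap_le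
      (by rw [finrank_euclideanSpace_fin]; omega) (zero_lt_one.trans hk)
  rw [finrank_euclideanSpace_fin] at hK
  refine ⟨max ((sphereArea n)⁻¹ * K) 1, by positivity, fun f g hf hg hsf hsg x t ht => ?_⟩
  set S := (∑ j ∈ Finset.range 3, ⨆ y, ‖iteratedFDeriv ℝ j f y‖)
    + ∑ j ∈ Finset.range 2, ⨆ y, ‖iteratedFDeriv ℝ j g y‖
  have hS : 0 ≤ S := by
    refine add_nonneg ?_ ?_ <;>
      exact Finset.sum_nonneg fun _ _ => Real.iSup_nonneg fun _ => norm_nonneg _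
  calc (t + ‖x‖ + 2 * k) ^ (n - 2) * |linearPart n f g x t|
      ≤ (t + ‖x‖ + 2 * k) ^ (n - 2) *
          ((sphereArea n)⁻¹ * ((1 + t) * S * (sphereMeasure n).real (sphereCap x t k))) := by
        gcongr
        exact abs_linearPart_le_sum_iSup hn (hf.of_le (by norm_num)) hg.continuous hsf hsg x ht
    _ = (sphereArea n)⁻¹ * ((t + ‖x‖ + 2 * k) ^ (n - 2) *
          ((sphereMeasure n).real (sphereCap x t k) * (1 + t))) * S := by ring
    _ ≤ (sphereArea n)⁻¹ * K * S := by
        gcongr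
        · exact inv_nonneg.2 (sphereArea_nonneg n)
        · exact hK x t ht
    _ ≤ max ((sphereArea n)⁻¹ * K) 1 * S := by gcongr; exact le_max_left _ _
end
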